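/- arXiv:2012.01662 — 3 statements merged into one kernel-verified Lean document; each statement's English description precedes it below -/
import Mathlib

section
/- Soundness of the if-then-else rule: let G be a type and C S T : G → Set (Option G) program semantics. Define SUCCESS(C) := {g | ∃ H, some H ∈ C g}, FAIL(C) := {g | none ∈ C g}, and the if-then-else semantics (IfThenElse C S T) g := {o | (g ∈ SUCCESS(C) ∧ o ∈ S g) ∨ (g ∈ FAIL(C) ∧ o ∈ T g)}. If {c ∩ SUCCESS(C)} S {d} and {c ∩ FAIL(C)} T {d} are partially correct, then {c} (IfThenElse C S T) {d} is partially correct. -/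
/-- The triple `{c} S {d}` is partially correct. -/
def PartiallyCorrect {G : Type*} (c : Set G) (S : G → Set (Option G)) (d : Set G) : Prop :=
  ∀ g ∈ c, ∀ H : G, some H ∈ S g → H ∈ d

/-- Graphs from which `C` can produce a result graph. -/
def SUCCESS {G : Type*} (C : G → Set (Option G)) : Set G :=
  {g : G | ∃ H : G, some H ∈ C g}

/-- Graphs from which `C` can fail. -/
def FAIL {G : Type*} (C : G → Set (Option G)) : Set G :=
  {g : G | none ∈ C g}

/-- Semantics of `if C then S else T`. -/
def IfThenElse {G : Type*} (C S T : G → Set (Option G)) : G → Set (Option G) :=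
  fun g => {o | (g ∈ SUCCESS C ∧ o ∈ S g) ∨ (g ∈ FAIL C ∧ o ∈ T g)}

/-- Soundness of the if-then-else rule. -/
theorem if_rule_sound {G : Type*} (C S T : G → Set (Option G)) (c d : Set G)
    (h1 : PartiallyCorrect (c ∩ SUCCESS C) S d)
    (h2 : PartiallyCorrect (c ∩ FAIL C) T d) :
    PartiallyCorrect c (IfThenElse C S T) d := by
  rintro g hg H (⟨hs, hS⟩ | ⟨hf, hT⟩)
  exacts [h1 g ⟨hg, hs⟩ H hS, h2 g ⟨hg, hf⟩ H hT]
end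

section
/- Soundness of the try-then-else rule: let G be a type and C S T : G → Set (Option G) program semantics. Define SUCCESS(C) := {g | ∃ H, some H ∈ C g}, FAIL(C) := {g | none ∈ C g}, sequential composition (C ; S) g := {none | none ∈ C g} ∪ ⋃ H ∈ {H | some H ∈ C g}, S H, and the try semantics (TryThenElse C S T) g := {o | (∃ H, some H ∈ C g ∧ o ∈ S H) ∨ (g ∈ FAIL(C) ∧ o ∈ T g)}. If {c ∩ SUCCESS(C)} (C ; S) {d} and {c ∩ FAIL(C)} T {d} are partially correct, then {c} (TryThenElse C S T) {d} is partially correct. -/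
/-- Sequential composition of two program semantics. -/
def SeqComp {G : Type*} (C S : G → Set (Option G)) : G → Set (Option G) :=
  fun g => {o | o = none ∧ none ∈ C g} ∪ ⋃ H ∈ {H : G | some H ∈ C g}, S H

/-- Semantics of `try C then S else T`. -/
def TryThenElse {G : Type*} (C S T : G → Set (Option G)) : G → Set (Option G) :=
  fun g => {o | (∃ H : G, some H ∈ C g ∧ o ∈ S H) ∨ (g ∈ FAIL C ∧ o ∈ T g)}

theorem mem_seqComp_of_mem {G : Type*} {C S : G → Set (Option G)} {g H : G} {o : Option G}
    (hC : some H ∈ C g) (hS : o ∈ S H) : o ∈ SeqComp C S g :=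
  Or.inr (Set.mem_biUnion hC hS)

/-- Soundness of the try-then-else rule. -/
theorem try_rule_sound {G : Type*} (C S T : G → Set (Option G)) (c d : Set G)
    (h1 : PartiallyCorrect (c ∩ SUCCESS C) (SeqComp C S) d)
    (h2 : PartiallyCorrect (c ∩ FAIL C) T d) :
    PartiallyCorrect c (TryThenElse C S T) d := by
  intro g hg H hH
  rcases hH with ⟨K, hC, hS⟩ | ⟨hF, hT⟩
  · exact h1 g ⟨hg, K, hC⟩ H (mem_seqComp_of_mem hC hS)
  · exact h2 g ⟨hg, hF⟩ H hT
end

section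
/- Soundness of the as-long-as-possible loop rule with break: let G be a type and let S : G → Set (G ⊕ G ⊕ Unit) be a program semantics with three kinds of outcomes on a graph g: a normal result graph H (inl H), a break result H (inr (inl H)), and failure (inr (inr ())). Define the normal-step relation g ⇝ H iff inl H ∈ S g, Fail(S) := {g | inr (inr ()) ∈ S g}, Break(c,S,d) :⟺ (∀ g H, g ∈ c → inr (inl H) ∈ S g → H ∈ d), and the loop result relation: H is a result of Loop(S) on g iff either (Relation.ReflTransGen (⇝) g H ∧ H ∈ Fail(S)) or (∃ K, Relation.ReflTransGen (⇝) g K ∧ inr (inl H) ∈ S K). If (∀ g H, g ∈ c → inl H ∈ S g → H ∈ c) and Break(c,S,d) hold, then every result H of Loop(S) on any g ∈ c satisfies H ∈ (c ∩ Fail(S)) ∪ d. -/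
/-- Normal step relation of a loop body with break: `g ⇝ H` iff a normal execution
of the body on `g` produces `H`. -/
def NormalStep {G : Type*} (S : G → Set (G ⊕ G ⊕ Unit)) : G → G → Prop :=
  fun g H => Sum.inl H ∈ S g

/-- Graphs on which the loop body can fail. -/
def FailB {G : Type*} (S : G → Set (G ⊕ G ⊕ Unit)) : Set G :=
  {g : G | Sum.inr (Sum.inr ()) ∈ S g}

/-- `Break c S d` holds iff whenever the body is executed on a graph satisfying `c`
and encounters break with current graph `H`, then `H` satisfies `d`. -/
def Break {G : Type*} (c : Set G) (S : G → Set (G ⊕ G ⊕ Unit)) (d : Set G) : Prop :=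
  ∀ g H : G, g ∈ c → Sum.inr (Sum.inl H) ∈ S g → H ∈ d

/-- `H` is a result of the loop `S!` on `g`. -/
def LoopResult {G : Type*} (S : G → Set (G ⊕ G ⊕ Unit)) (g H : G) : Prop :=
  (Relation.ReflTransGen (NormalStep S) g H ∧ H ∈ FailB S) ∨
    (∃ K : G, Relation.ReflTransGen (NormalStep S) g K ∧ Sum.inr (Sum.inl H) ∈ S K)

theorem Relation.ReflTransGen.mem_of_closed {α : Type*} {r : α → α → Prop} {s : Set α} {a b : α}
    (hs : ∀ x y, x ∈ s → r x y → y ∈ s) (hab : Relation.ReflTransGen r a b) (ha : a ∈ s) :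
    b ∈ s := by
  induction hab with
  | refl => exact ha
  | tail _ hstep ih => exact hs _ _ ih hstep

/-- Soundness of the as-long-as-possible loop rule with break. -/
theorem alap_break_rule_sound {G : Type*} (S : G → Set (G ⊕ G ⊕ Unit)) (c d : Set G)
    (hinv : ∀ g H : G, g ∈ c → Sum.inl H ∈ S g → H ∈ c)
    (hbreak : Break c S d) :
    ∀ g ∈ c, ∀ H : G, LoopResult S g H → H ∈ (c ∩ FailB S) ∪ d := by
  intro g hg H hH
  have reachable_mem {K : G} (hK : Relation.ReflTransGen (NormalStep S) g K) : K ∈ c :=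
    hK.mem_of_closed hinv hg
  rcases hH with ⟨hreach, hfail⟩ | ⟨K, hreach, hbr⟩
  · exact Or.inl ⟨reachable_mem hreach, hfail⟩
  · exact Or.inr (hbreak K H (reachable_mem hreach) hbr)
end
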